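/- arXiv:math-ph/0503056 — 3 statements merged into one kernel-verified Lean document; each statement's English description precedes it below -/
import Mathlib

section
/- Let A and B be nonnegative n×n real matrices with A_{ij} ≤ B_{ij} entrywise. Suppose B is irreducible (some power of B has all entries strictly positive) and there is at least one pair (i,j) with A_{ij} < B_{ij}. Then the spectral radius of A is strictly less than the spectral radius of B. -/
/-- Spectral radius of a complex square matrix: supremum of absolute values
of its eigenvalues (elements of the spectrum). -/
noncomputable def specRad {n : ℕ} (M : Matrix (Fin n) (Fin n) ℂ) : ℝ :=
  sSup ((fun μ : ℂ => ‖μ‖) '' spectrum ℂ M)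

/-!
Gelfand's formula gives a Collatz–Wielandt lower bound: if `t y ≤ B y` entrywise for a nonnegative
matrix `B` and a vector `y` with a positive entry, then `‖(B ^ m) y‖` grows like `t ^ m`, so
`t ≤ ρ(B)`. For an eigenvalue `μ` of `A` of maximal modulus with eigenvector `x`, the vector
`y = |x|` satisfies `|μ| y ≤ A y ≤ B y`, hence `ρ(A) ≤ ρ(B)`. If equality held, then `B y = ρ(B) y`:
otherwise `z = B ^ k y` is positive and `ρ(B) z < B z` in every entry, which pushes the bound
above `ρ(B)`. Then `y = B ^ k y / ρ(B) ^ k` is positive, so `(A y)ᵢ < (B y)ᵢ = ρ(B) yᵢ` in a row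
where `A` and `B` differ, contradicting `ρ(B) y ≤ A y`.
-/

open Filter Topology Matrix

theorem ofReal_le_spectralRadius_of_mul_pow_le_norm_pow {𝔸 : Type*} [NormedRing 𝔸]
    [NormedAlgebra ℂ 𝔸] [CompleteSpace 𝔸] (a : 𝔸) {c t : ℝ} (hc : 0 < c) (ht : 0 ≤ t)
    (h : ∀ m : ℕ, c * t ^ m ≤ ‖a ^ m‖) : ENNReal.ofReal t ≤ spectralRadius ℂ a := by
  have hc_root : Tendsto (fun m : ℕ => c ^ (1 / m : ℝ) * t) atTop (𝓝 t) := by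
    simpa using ((Real.continuousAt_const_rpow hc.ne').tendsto.comp
      tendsto_one_div_atTop_nhds_zero_nat).mul_const t
  refine le_of_tendsto_of_tendsto (ENNReal.tendsto_ofReal hc_root)
    (spectrum.pow_norm_pow_one_div_tendsto_nhds_spectralRadius a) ?_
  filter_upwards [eventually_ne_atTop 0] with m hm
  refine ENNReal.ofReal_le_ofReal ?_
  calc c ^ (1 / m : ℝ) * t = (c * t ^ m) ^ (1 / m : ℝ) := by
        rw [Real.mul_rpow hc.le (by positivity), ← Real.rpow_natCast,
          ← Real.rpow_mul ht, mul_one_div_cancel (by exact_mod_cast hm), Real.rpow_one]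
    _ ≤ ‖a ^ m‖ ^ (1 / m : ℝ) := by gcongr; exact h m

namespace Matrix

variable {ι : Type*} [Fintype ι] {B M : Matrix ι ι ℝ} {u v y : ι → ℝ}

theorem mulVec_apply_le_mulVec_apply (hB : ∀ i j, 0 ≤ B i j) (huv : ∀ j, u j ≤ v j) (i : ι) :
    (B *ᵥ u) i ≤ (B *ᵥ v) i :=
  Finset.sum_le_sum fun j _ => mul_le_mul_of_nonneg_left (huv j) (hB i j)

theorem mulVec_apply_le_mulVec_apply_of_le (hMB : ∀ i j, M i j ≤ B i j) (hy : ∀ j, 0 ≤ y j)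
    (i : ι) : (M *ᵥ y) i ≤ (B *ᵥ y) i :=
  Finset.sum_le_sum fun j _ => mul_le_mul_of_nonneg_right (hMB i j) (hy j)

theorem mulVec_apply_lt_mulVec_apply_of_lt (hMB : ∀ i j, M i j ≤ B i j) {i j : ι}
    (hij : M i j < B i j) (hy : ∀ j, 0 < y j) : (M *ᵥ y) i < (B *ᵥ y) i :=
  Finset.sum_lt_sum (fun l _ => mul_le_mul_of_nonneg_right (hMB i l) (hy l).le)
    ⟨j, Finset.mem_univ j, mul_lt_mul_of_pos_right hij (hy j)⟩

theorem mulVec_apply_pos (hM : ∀ i j, 0 < M i j) (hy : ∀ j, 0 ≤ y j) {j : ι} (hj : 0 < y j)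
    (i : ι) : 0 < (M *ᵥ y) i :=
  Finset.sum_pos' (fun l _ => mul_nonneg (hM i l).le (hy l))
    ⟨j, Finset.mem_univ j, mul_pos (hM i j) hj⟩

variable [DecidableEq ι]

theorem mul_pow_le_pow_mulVec_apply (hB : ∀ i j, 0 ≤ B i j) {t : ℝ} (ht : 0 ≤ t)
    (h : ∀ i, t * y i ≤ (B *ᵥ y) i) (m : ℕ) (i : ι) : t ^ m * y i ≤ (B ^ m *ᵥ y) i := by
  induction m generalizing i with
  | zero => simp
  | succ m ih =>
    calc t ^ (m + 1) * y i = t * (t ^ m * y i) := by ring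
      _ ≤ t * (B ^ m *ᵥ y) i := mul_le_mul_of_nonneg_left (ih i) ht
      _ = (B ^ m *ᵥ (t • y)) i := by simp [mulVec_smul]
      _ ≤ (B ^ m *ᵥ (B *ᵥ y)) i := mulVec_apply_le_mulVec_apply (pow_apply_nonneg hB m) h i
      _ = (B ^ (m + 1) *ᵥ y) i := by rw [mulVec_mulVec, pow_succ]

theorem pow_mulVec_eq_pow_smul {c : ℝ} (h : B *ᵥ y = c • y) (m : ℕ) :
    B ^ m *ᵥ y = c ^ m • y := by
  induction m with
  | zero => simp
  | succ m ih => rw [pow_succ', ← mulVec_mulVec, ih, mulVec_smul, h, smul_smul, pow_succ]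

theorem pos_of_pow_pos_of_mulVec_eq_smul {k : ℕ} (hBk : ∀ i j, 0 < (B ^ k) i j)
    (hy : ∀ i, 0 ≤ y i) {j : ι} (hj : 0 < y j) {c : ℝ} (hc : 0 ≤ c) (h : B *ᵥ y = c • y)
    (i : ι) : 0 < y i := by
  have hpos := mulVec_apply_pos hBk hy hj i
  rw [pow_mulVec_eq_pow_smul h] at hpos
  exact pos_of_mul_pos_right hpos (pow_nonneg hc k)

theorem exists_nonneg_norm_mul_le_mulVec (hB : ∀ i j, 0 ≤ B i j) {μ : ℂ}
    (hμ : μ ∈ spectrum ℂ (B.map fun x => (x : ℂ))) :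
    ∃ y : ι → ℝ, (∀ i, 0 ≤ y i) ∧ (∃ j, 0 < y j) ∧ ∀ i, ‖μ‖ * y i ≤ (B *ᵥ y) i := by
  rw [← spectrum_toLin', ← Module.End.hasEigenvalue_iff_mem_spectrum] at hμ
  obtain ⟨x, hx, hx0⟩ := hμ.exists_hasEigenvector
  rw [Module.End.mem_eigenspace_iff, toLin'_apply] at hx
  obtain ⟨j, hj⟩ := Function.ne_iff.1 hx0
  refine ⟨fun i => ‖x i‖, fun i => norm_nonneg _, ⟨j, norm_pos_iff.2 hj⟩, fun i => ?_⟩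
  calc ‖μ‖ * ‖x i‖ = ‖∑ l, (B i l : ℂ) * x l‖ := by
        rw [← norm_mul, ← smul_eq_mul, ← Pi.smul_apply, ← hx]; rfl
    _ ≤ ∑ l, ‖(B i l : ℂ) * x l‖ := norm_sum_le _ _
    _ = (B *ᵥ fun i => ‖x i‖) i := by
        simp [mulVec, dotProduct, Complex.norm_real, abs_of_nonneg (hB i _)]

end Matrix

section specRad

variable {n : ℕ}

theorem specRad_nonneg (M : Matrix (Fin n) (Fin n) ℂ) : 0 ≤ specRad M :=
  Real.sSup_nonneg (by rintro _ ⟨μ, -, rfl⟩; exact norm_nonneg μ)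

theorem norm_le_specRad {M : Matrix (Fin n) (Fin n) ℂ} {μ : ℂ} (hμ : μ ∈ spectrum ℂ M) :
    ‖μ‖ ≤ specRad M :=
  le_csSup (M.finite_spectrum.image _).bddAbove ⟨μ, hμ, rfl⟩

theorem exists_mem_spectrum_norm_eq_specRad [NeZero n] (M : Matrix (Fin n) (Fin n) ℂ) :
    ∃ μ ∈ spectrum ℂ M, ‖μ‖ = specRad M :=
  ((spectrum.nonempty_of_isAlgClosed_of_finiteDimensional ℂ M).image _).csSup_mem
    (M.finite_spectrum.image _)

theorem spectralRadius_le_ofReal_specRad (M : Matrix (Fin n) (Fin n) ℂ) :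
    spectralRadius ℂ M ≤ ENNReal.ofReal (specRad M) :=
  iSup₂_le fun μ hμ => by
    rw [← enorm_eq_nnnorm, ← ofReal_norm]
    exact ENNReal.ofReal_le_ofReal (norm_le_specRad hμ)

attribute [local instance] Matrix.linftyOpNormedRing Matrix.linftyOpNormedAlgebra in
theorem le_specRad_of_mul_le_mulVec {B : Matrix (Fin n) (Fin n) ℝ} (hB : ∀ i j, 0 ≤ B i j)
    {y : Fin n → ℝ} {i₀ : Fin n} (hy₀ : 0 < y i₀) {t : ℝ} (ht : 0 ≤ t)
    (h : ∀ i, t * y i ≤ (B *ᵥ y) i) : t ≤ specRad (B.map fun x => (x : ℂ)) := by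
  set y' : Fin n → ℂ := fun i => (y i : ℂ)
  have hy' : 0 < ‖y'‖ := norm_pos_iff.2 fun h0 => hy₀.ne' (by simpa [y'] using congrFun h0 i₀)
  have hpow (m : ℕ) : y i₀ / ‖y'‖ * t ^ m ≤ ‖(B.map fun x => (x : ℂ)) ^ m‖ := by
    rw [div_mul_eq_mul_div, div_le_iff₀ hy', mul_comm]
    have hcast : ((B.map fun x => (x : ℂ)) ^ m *ᵥ y') i₀ = ((B ^ m *ᵥ y) i₀ : ℂ) := by
      rw [← Complex.ofRealHom_eq_coe, RingHom.map_mulVec, Matrix.map_pow]; rfl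
    calc t ^ m * y i₀ ≤ (B ^ m *ᵥ y) i₀ := mul_pow_le_pow_mulVec_apply hB ht h m i₀
      _ ≤ ‖((B ^ m *ᵥ y) i₀ : ℂ)‖ := by rw [Complex.norm_real]; exact le_abs_self _
      _ = ‖((B.map fun x => (x : ℂ)) ^ m *ᵥ y') i₀‖ := by rw [hcast]
      _ ≤ ‖(B.map fun x => (x : ℂ)) ^ m *ᵥ y'‖ := norm_le_pi_norm _ i₀
      _ ≤ ‖(B.map fun x => (x : ℂ)) ^ m‖ * ‖y'‖ := linfty_opNorm_mulVec _ _
  have := (ofReal_le_spectralRadius_of_mul_pow_le_norm_pow _ (div_pos hy₀ hy') ht hpow).trans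
    (spectralRadius_le_ofReal_specRad _)
  exact (ENNReal.ofReal_le_ofReal_iff (specRad_nonneg _)).1 this

theorem lt_specRad_of_mul_lt_mulVec [NeZero n] {B : Matrix (Fin n) (Fin n) ℝ}
    (hB : ∀ i j, 0 ≤ B i j) {z : Fin n → ℝ} (hz : ∀ i, 0 < z i) {r : ℝ} (hr : 0 ≤ r)
    (h : ∀ i, r * z i < (B *ᵥ z) i) : r < specRad (B.map fun x => (x : ℂ)) := by
  have hnear : ∀ᶠ t in 𝓝[>] r, ∀ i, t * z i ≤ (B *ᵥ z) i :=
    eventually_all.2 fun i => nhdsWithin_le_nhds <|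
      ((continuous_mul_const (z i)).tendsto r).eventually <| eventually_le_nhds (h i)
  obtain ⟨t, ht, hrt⟩ := (hnear.and self_mem_nhdsWithin).exists
  exact hrt.trans_le (le_specRad_of_mul_le_mulVec hB (hz 0) (hr.trans hrt.le) ht)

theorem mulVec_eq_specRad_smul_of_le [NeZero n] {B : Matrix (Fin n) (Fin n) ℝ}
    (hB : ∀ i j, 0 ≤ B i j) {k : ℕ} (hBk : ∀ i j, 0 < (B ^ k) i j) {y : Fin n → ℝ}
    (hy : ∀ i, 0 ≤ y i) {j : Fin n} (hj : 0 < y j)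
    (h : ∀ i, specRad (B.map fun x => (x : ℂ)) * y i ≤ (B *ᵥ y) i) :
    B *ᵥ y = specRad (B.map fun x => (x : ℂ)) • y := by
  set r := specRad (B.map fun x => (x : ℂ))
  by_contra hne
  obtain ⟨l, hl⟩ : ∃ l, r * y l < (B *ᵥ y) l := by
    by_contra! hall
    exact hne (funext fun i => le_antisymm (hall i) (h i))
  have hz_up (i : Fin n) : r * (B ^ k *ᵥ y) i < (B *ᵥ (B ^ k *ᵥ y)) i := by
    -- `B ^ k (B y - r y)` is `B z - r z` for `z = B ^ k y`
    have hpos := mulVec_apply_pos (y := B *ᵥ y - r • y) hBk (fun i => sub_nonneg.2 (h i))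
      (sub_pos.2 hl) i
    rwa [mulVec_sub, mulVec_smul, mulVec_mulVec, ← pow_succ, pow_succ', ← mulVec_mulVec,
      Pi.sub_apply, sub_pos] at hpos
  exact (lt_specRad_of_mul_lt_mulVec hB (mulVec_apply_pos hBk hy hj) (specRad_nonneg _)
    hz_up).false

end specRad

/-- If `A ≤ B` entrywise with both nonnegative, `B` irreducible (some power of `B` is
entrywise strictly positive), and `A i j < B i j` for at least one entry, then the
spectral radius of `A` is strictly smaller than that of `B`. -/
theorem specRad_strict_mono {n : ℕ} (A B : Matrix (Fin n) (Fin n) ℝ)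
    (hA : ∀ i j, 0 ≤ A i j) (hB : ∀ i j, 0 ≤ B i j)
    (hAB : ∀ i j, A i j ≤ B i j)
    (hirr : ∃ k : ℕ, 0 < k ∧ ∀ i j, 0 < (B ^ k) i j)
    (hstrict : ∃ i j, A i j < B i j) :
    specRad (A.map (fun x => (x : ℂ))) < specRad (B.map (fun x => (x : ℂ))) := by
  obtain ⟨i₀, j₀, hij⟩ := hstrict
  obtain ⟨k, -, hBk⟩ := hirr
  have : NeZero n := NeZero.of_pos i₀.pos
  obtain ⟨μ, hμ, hμA⟩ := exists_mem_spectrum_norm_eq_specRad (A.map fun x => (x : ℂ))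
  obtain ⟨y, hy, ⟨j, hj⟩, hAy⟩ := exists_nonneg_norm_mul_le_mulVec hA hμ
  have hBy (i : Fin n) : ‖μ‖ * y i ≤ (B *ᵥ y) i :=
    (hAy i).trans (mulVec_apply_le_mulVec_apply_of_le hAB hy i)
  rw [← hμA]
  refine (le_specRad_of_mul_le_mulVec hB hj (norm_nonneg μ) hBy).lt_of_ne fun heq => ?_
  rw [heq] at hAy hBy
  have hBy_eq := mulVec_eq_specRad_smul_of_le hB hBk hy hj hBy
  have hy_pos := pos_of_pow_pos_of_mulVec_eq_smul hBk hy hj (specRad_nonneg _) hBy_eq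
  have hlt := mulVec_apply_lt_mulVec_apply_of_lt hAB hij hy_pos
  rw [hBy_eq] at hlt
  exact (hAy i₀).not_gt hlt
end

section
/- Let A be an n×n and B an m×m real symmetric matrix with n ≤ m, both having all off-diagonal entries nonpositive, and such that B_{ij} ≤ A_{ij} for all 1 ≤ i,j ≤ n. Then the smallest eigenvalue of B is at most the smallest eigenvalue of A. -/
/-!
Let `v` be a unit eigenvector of `A` for its smallest eigenvalue. Because the off-diagonal entries
of `A` are nonpositive, passing to `|v|` can only lower the quadratic form of `A`; because `B ≤ A`
entrywise on the leading block and `|v| ≥ 0`, the form of the leading block of `B` at `|v|` is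
lower still. Extending `|v|` by zero to a unit vector of size `m`, the Rayleigh bound for `B`
gives `λ_min(B) ≤ ⟨|v|, B|v|⟩ ≤ ⟨|v|, A|v|⟩ ≤ ⟨v, Av⟩ = λ_min(A)`.
-/

open Matrix MatrixOrder Function

namespace Matrix

variable {ι κ R : Type*} [Fintype ι]

theorem extend_zero_dotProduct [Fintype κ] [Semiring R] {f : ι → κ} (hf : Injective f)
    (u : ι → R) (y : κ → R) : extend f u 0 ⬝ᵥ y = u ⬝ᵥ (y ∘ f) :=
  (Fintype.sum_of_injective f hf _ _
    (fun k hk ↦ by simp [extend_apply' _ _ _ fun ⟨i, hi⟩ ↦ hk ⟨i, hi⟩])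
    (fun i ↦ by simp [hf.extend_apply])).symm

theorem extend_zero_dotProduct_mulVec_extend_zero [Fintype κ] [CommSemiring R] {f : ι → κ}
    (hf : Injective f) (B : Matrix κ κ R) (x : ι → R) :
    extend f x 0 ⬝ᵥ (B *ᵥ extend f x 0) = x ⬝ᵥ (B.submatrix f f *ᵥ x) := by
  rw [extend_zero_dotProduct hf]
  congr 1
  ext i
  change (fun j ↦ B (f i) j) ⬝ᵥ extend f x 0 = (fun j ↦ B (f i) (f j)) ⬝ᵥ x
  rw [dotProduct_comm, extend_zero_dotProduct hf, dotProduct_comm]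
  rfl

theorem dotProduct_mulVec_le_dotProduct_mulVec [CommSemiring R] [PartialOrder R]
    [IsOrderedRing R] {M N : Matrix ι ι R} (hMN : ∀ i j, M i j ≤ N i j) {x : ι → R} (hx : 0 ≤ x) :
    x ⬝ᵥ (M *ᵥ x) ≤ x ⬝ᵥ (N *ᵥ x) := by
  simp only [dotProduct, mulVec, Finset.mul_sum]
  gcongr with i _ j _
  · exact hx i
  · exact hx j
  · exact hMN i j

theorem abs_dotProduct_abs (x : ι → ℝ) : |x| ⬝ᵥ |x| = x ⬝ᵥ x := by
  simp only [dotProduct, Pi.abs_apply, abs_mul_abs_self]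

theorem abs_dotProduct_mulVec_abs_le {M : Matrix ι ι ℝ} (hM : ∀ i j, i ≠ j → M i j ≤ 0)
    (x : ι → ℝ) : |x| ⬝ᵥ (M *ᵥ |x|) ≤ x ⬝ᵥ (M *ᵥ x) := by
  simp only [dotProduct, mulVec, Finset.mul_sum, Pi.abs_apply]
  refine Finset.sum_le_sum fun i _ ↦ Finset.sum_le_sum fun j _ ↦ ?_
  obtain rfl | hij := eq_or_ne i j
  · rw [mul_left_comm, abs_mul_abs_self, mul_left_comm]
  · calc |x i| * (M i j * |x j|) = M i j * (|x i| * |x j|) := by ring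
      _ ≤ M i j * (x i * x j) := by
        rw [← abs_mul]; exact mul_le_mul_of_nonpos_left (le_abs_self _) (hM i j hij)
      _ = x i * (M i j * x j) := by ring

namespace IsHermitian

variable [DecidableEq ι] {M : Matrix ι ι ℝ} (hM : M.IsHermitian)

theorem iInf_eigenvalues_mul_dotProduct_self_le (x : ι → ℝ) :
    (⨅ i, hM.eigenvalues i) * (x ⬝ᵥ x) ≤ x ⬝ᵥ (M *ᵥ x) := by
  have hle : algebraMap ℝ (Matrix ι ι ℝ) (⨅ i, hM.eigenvalues i) ≤ M := by
    rw [algebraMap_le_iff_le_spectrum hM.isSelfAdjoint, hM.spectrum_real_eq_range_eigenvalues]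
    rintro _ ⟨i, rfl⟩
    exact ciInf_le (Set.finite_range _).bddBelow i
  have := (Matrix.le_iff.mp hle).dotProduct_mulVec_nonneg x
  rw [star_trivial, sub_mulVec, dotProduct_sub, Algebra.algebraMap_eq_smul_one, smul_mulVec,
    one_mulVec, dotProduct_smul, smul_eq_mul] at this
  linarith

theorem exists_dotProduct_mulVec_eq_iInf_eigenvalues [Nonempty ι] :
    ∃ v : ι → ℝ, v ⬝ᵥ v = 1 ∧ v ⬝ᵥ (M *ᵥ v) = ⨅ i, hM.eigenvalues i := by
  obtain ⟨i, hi⟩ := exists_eq_ciInf_of_finite (f := hM.eigenvalues)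
  have hunit : ⇑(hM.eigenvectorBasis i) ⬝ᵥ ⇑(hM.eigenvectorBasis i) = 1 := by
    have h := real_inner_self_eq_norm_sq (hM.eigenvectorBasis i)
    rwa [hM.eigenvectorBasis.orthonormal.1 i, EuclideanSpace.inner_eq_star_dotProduct, star_trivial,
      one_pow] at h
  refine ⟨_, hunit, ?_⟩
  rw [mulVec_eigenvectorBasis, dotProduct_smul, hunit, smul_eq_mul, mul_one, hi]

theorem iInf_eigenvalues_mul_dotProduct_self_le_submatrix [Fintype κ] {f : κ → ι}
    (hf : Injective f) (x : κ → ℝ) :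
    (⨅ i, hM.eigenvalues i) * (x ⬝ᵥ x) ≤ x ⬝ᵥ (M.submatrix f f *ᵥ x) := by
  have h := hM.iInf_eigenvalues_mul_dotProduct_self_le (extend f x 0)
  rwa [extend_zero_dotProduct_mulVec_extend_zero hf, extend_zero_dotProduct hf,
    extend_comp hf] at h

end IsHermitian

end Matrix

theorem min_eigenvalue_mono_general {n m : ℕ} (hn : 0 < n) (hnm : n ≤ m)
    (A : Matrix (Fin n) (Fin n) ℝ) (B : Matrix (Fin m) (Fin m) ℝ)
    (hA : A.IsHermitian) (hB : B.IsHermitian)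
    (hAoff : ∀ i j, i ≠ j → A i j ≤ 0)
    (hBA : ∀ i j : Fin n, B (Fin.castLE hnm i) (Fin.castLE hnm j) ≤ A i j) :
    (⨅ i, hB.eigenvalues i) ≤ ⨅ i, hA.eigenvalues i := by
  have : Nonempty (Fin n) := ⟨⟨0, hn⟩⟩
  obtain ⟨v, hv, hvA⟩ := hA.exists_dotProduct_mulVec_eq_iInf_eigenvalues
  calc (⨅ i, hB.eigenvalues i) = (⨅ i, hB.eigenvalues i) * (|v| ⬝ᵥ |v|) := by
        rw [abs_dotProduct_abs, hv, mul_one]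
    _ ≤ |v| ⬝ᵥ (B.submatrix (Fin.castLE hnm) (Fin.castLE hnm) *ᵥ |v|) :=
        hB.iInf_eigenvalues_mul_dotProduct_self_le_submatrix (Fin.castLE_injective hnm) |v|
    _ ≤ |v| ⬝ᵥ (A *ᵥ |v|) := dotProduct_mulVec_le_dotProduct_mulVec hBA (abs_nonneg v)
    _ ≤ v ⬝ᵥ (A *ᵥ v) := abs_dotProduct_mulVec_abs_le hAoff v
    _ = ⨅ i, hA.eigenvalues i := hvA

/-- Let `A` be `n × n` and `B` be `m × m` real symmetric matrices, `n ≤ m`, both with all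
off-diagonal entries nonpositive, and `B i j ≤ A i j` for all indices `i, j < n`. Then the
smallest eigenvalue of `B` is at most the smallest eigenvalue of `A`. -/
theorem min_eigenvalue_mono {n m : ℕ} (hn : 0 < n) (hnm : n ≤ m)
    (A : Matrix (Fin n) (Fin n) ℝ) (B : Matrix (Fin m) (Fin m) ℝ)
    (hA : A.IsHermitian) (hB : B.IsHermitian)
    (hAoff : ∀ i j, i ≠ j → A i j ≤ 0)
    (hBoff : ∀ i j, i ≠ j → B i j ≤ 0)
    (hBA : ∀ i j : Fin n, B (Fin.castLE hnm i) (Fin.castLE hnm j) ≤ A i j) :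
    (⨅ i, hB.eigenvalues i) ≤ ⨅ i, hA.eigenvalues i :=
  min_eigenvalue_mono_general hn hnm A B hA hB hAoff hBA
end

section
/- The number of configurations of n non-crossing arcs on k linearly ordered vertices such that no arc spans an unpaired vertex (i.e., no unpaired vertex lies strictly below/under any arc) equals the ballot number binom(k, n) − binom(k, n−1), for 0 ≤ n ≤ k/2. -/
/-- A Temperley–Lieb arc configuration on `k` linearly ordered vertices:
a set of arcs `(x, y)` with `x < y`, pairwise disjoint endpoints, mutually
non-crossing, and such that no arc spans an unpaired vertex. -/
def IsTLConfig {k : ℕ} (α : Finset (Fin k × Fin k)) : Prop :=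
  (∀ p ∈ α, p.1 < p.2) ∧
  -- disjoint endpoints: distinct arcs share no vertex
  (∀ p ∈ α, ∀ q ∈ α, p ≠ q →
    p.1 ≠ q.1 ∧ p.1 ≠ q.2 ∧ p.2 ≠ q.1 ∧ p.2 ≠ q.2) ∧
  -- non-crossing
  (∀ p ∈ α, ∀ q ∈ α, ¬(p.1 < q.1 ∧ q.1 < p.2 ∧ p.2 < q.2)) ∧
  -- no arc spans an unpaired vertex
  (∀ p ∈ α, ∀ z : Fin k, p.1 < z → z < p.2 →
    ∃ q ∈ α, z = q.1 ∨ z = q.2)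

/-!
Sort the configurations on `k + 1` vertices by the last vertex. If it is unpaired, deleting it
leaves an arbitrary configuration on `k` vertices. If it is paired with `x`, then every vertex
strictly between `x` and the last one is spanned, hence paired, while `x` is unpaired once its arc is
removed: so `x` is the largest unpaired vertex of the remaining configuration, and removing the arc
is a bijection onto the configurations with one arc fewer that have an unpaired vertex, which is all
of them when `2 * n < k`. The counts therefore satisfy Pascal's rule
`c (k + 1) (n + 1) = c k (n + 1) + c k n`, as do the ballot numbers, and the boundary case
`c (2 * n + 1) (n + 1) = 0 = C(2n+1, n+1) - C(2n+1, n)` closes the induction.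
-/

open Finset

namespace TLConfig

variable {k : ℕ}

def endpoints (α : Finset (Fin k × Fin k)) : Finset (Fin k) :=
  α.image Prod.fst ∪ α.image Prod.snd

theorem mem_endpoints {α : Finset (Fin k × Fin k)} {z : Fin k} :
    z ∈ endpoints α ↔ ∃ q ∈ α, z = q.1 ∨ z = q.2 := by
  simp only [endpoints, mem_union, mem_image]
  grind

theorem _root_.IsTLConfig.card_endpoints {α : Finset (Fin k × Fin k)} (h : IsTLConfig α) :
    (endpoints α).card = 2 * α.card := by
  obtain ⟨hlt, hdisj, -, -⟩ := h
  have hfst : Set.InjOn Prod.fst (α : Set (Fin k × Fin k)) := by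
    intro p hp q hq hpq
    by_contra hne
    exact (hdisj p hp q hq hne).1 hpq
  have hsnd : Set.InjOn Prod.snd (α : Set (Fin k × Fin k)) := by
    intro p hp q hq hpq
    by_contra hne
    exact (hdisj p hp q hq hne).2.2.2 hpq
  have hdisjoint : Disjoint (α.image Prod.fst) (α.image Prod.snd) := by
    simp only [disjoint_left, mem_image, not_exists, not_and]
    rintro _ ⟨p, hp, rfl⟩ q hq hqp
    obtain rfl | hne := eq_or_ne p q
    · exact (hlt p hp).ne hqp.symm
    · exact (hdisj p hp q hq hne).2.1 hqp.symm
  rw [endpoints, card_union_of_disjoint hdisjoint, card_image_of_injOn hfst,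
    card_image_of_injOn hsnd, two_mul]

theorem _root_.IsTLConfig.two_mul_card_le {α : Finset (Fin k × Fin k)} (h : IsTLConfig α) :
    2 * α.card ≤ k := by
  simpa [h.card_endpoints] using card_le_univ (endpoints α)

theorem _root_.IsTLConfig.exists_unpaired {α : Finset (Fin k × Fin k)} (h : IsTLConfig α)
    (hk : 2 * α.card < k) : (univ \ endpoints α).Nonempty := by
  rw [sdiff_nonempty]
  intro hsub
  have := card_le_card hsub
  simp only [card_univ, Fintype.card_fin, h.card_endpoints] at this
  omega

theorem isTLConfig_empty : IsTLConfig (∅ : Finset (Fin k × Fin k)) := by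
  simp [IsTLConfig]

theorem _root_.IsTLConfig.insert {α : Finset (Fin k × Fin k)} {x y : Fin k} (h : IsTLConfig α)
    (hxy : x < y) (hx : x ∉ endpoints α) (hy : y ∉ endpoints α)
    (hspan : ∀ z, x < z → z < y → z ∈ endpoints α) : IsTLConfig (insert (x, y) α) := by
  obtain ⟨hlt, hdisj, hcross, hcov⟩ := h
  have hoff : ∀ p ∈ α, ∀ z ∉ endpoints α, p.1 ≠ z ∧ p.2 ≠ z := fun p hp z hz =>
    ⟨fun e => hz (mem_endpoints.2 ⟨p, hp, Or.inl e.symm⟩),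
      fun e => hz (mem_endpoints.2 ⟨p, hp, Or.inr e.symm⟩)⟩
  have hunspanned : ∀ p ∈ α, ∀ z ∉ endpoints α, ¬(p.1 < z ∧ z < p.2) :=
    fun p hp z hz hpz => hz (mem_endpoints.2 (hcov p hp z hpz.1 hpz.2))
  refine ⟨?_, ?_, ?_, ?_⟩ <;> simp only [forall_mem_insert, exists_mem_insert]
  · exact ⟨hxy, hlt⟩
  · refine ⟨⟨fun h => (h rfl).elim, fun q hq _ => ?_⟩, fun p hp => ⟨fun _ => ?_, hdisj p hp⟩⟩
    · have := hoff q hq x hx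
      have := hoff q hq y hy
      grind
    · have := hoff p hp x hx
      have := hoff p hp y hy
      grind
  -- an arc crossing `(x, y)` would span `x` or `y`
  · refine ⟨⟨by simp, fun q hq => ?_⟩, fun p hp => ⟨?_, hcross p hp⟩⟩
    · have := hunspanned q hq y hy
      grind
    · have := hunspanned p hp x hx
      grind
  · refine ⟨fun z hxz hzy => ?_, fun p hp z h1 h2 => Or.inr (hcov p hp z h1 h2)⟩
    exact Or.inr (mem_endpoints.1 (hspan z hxz hzy))

theorem _root_.IsTLConfig.erase {α : Finset (Fin k × Fin k)} {a : Fin k × Fin k} (h : IsTLConfig α)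
    (ha : a ∈ α) (houter : ∀ p ∈ α, ¬(p.1 < a.1 ∧ a.2 < p.2)) :
    IsTLConfig (α.erase a) := by
  obtain ⟨hlt, hdisj, hcross, hcov⟩ := h
  refine ⟨fun p hp => hlt p (mem_of_mem_erase hp),
    fun p hp q hq => hdisj p (mem_of_mem_erase hp) q (mem_of_mem_erase hq),
    fun p hp q hq => hcross p (mem_of_mem_erase hp) q (mem_of_mem_erase hq), ?_⟩
  intro p hp z h1 h2
  have hpa := ne_of_mem_erase hp
  replace hp := mem_of_mem_erase hp
  obtain ⟨q, hq, hzq⟩ := hcov p hp z h1 h2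
  obtain rfl | hqa := eq_or_ne q a
  -- `p` spans an endpoint of the outermost arc `q`, so it crosses or encloses `q`
  · have := hdisj p hp q hq hpa
    have := hcross p hp q hq
    have := hcross q hq p hp
    have := houter p hp
    have := hlt q hq
    grind
  · exact ⟨q, mem_erase.2 ⟨hqa, hq⟩, hzq⟩

def liftArcs (α : Finset (Fin k × Fin k)) : Finset (Fin (k + 1) × Fin (k + 1)) :=
  α.map (Fin.castSuccEmb.prodMap Fin.castSuccEmb)

theorem liftArcs_injective : Function.Injective (liftArcs (k := k)) :=
  map_injective _

theorem card_liftArcs (α : Finset (Fin k × Fin k)) : (liftArcs α).card = α.card :=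
  card_map _

theorem endpoints_liftArcs (α : Finset (Fin k × Fin k)) :
    endpoints (liftArcs α) = (endpoints α).map Fin.castSuccEmb := by
  simp only [endpoints, liftArcs, map_eq_image, image_union, image_image]
  rfl

theorem castSucc_mem_endpoints_liftArcs {α : Finset (Fin k × Fin k)} {z : Fin k} :
    z.castSucc ∈ endpoints (liftArcs α) ↔ z ∈ endpoints α := by
  simp [endpoints_liftArcs]

theorem last_notMem_endpoints_liftArcs (α : Finset (Fin k × Fin k)) :
    Fin.last k ∉ endpoints (liftArcs α) := by
  simp [endpoints_liftArcs, Fin.castSucc_ne_last]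

theorem isTLConfig_liftArcs_iff {α : Finset (Fin k × Fin k)} :
    IsTLConfig (liftArcs α) ↔ IsTLConfig α := by
  have hlast (i : Fin k) : ¬Fin.last k < i.castSucc := (Fin.castSucc_lt_last i).not_gt
  simp only [IsTLConfig, liftArcs, forall_mem_map]
  simp [Fin.forall_fin_succ', hlast]

theorem exists_liftArcs_eq {α : Finset (Fin (k + 1) × Fin (k + 1))}
    (h : ∀ p ∈ α, p.1 ≠ Fin.last k ∧ p.2 ≠ Fin.last k) : ∃ β, liftArcs β = α := by
  have hsub : α ⊆ univ.map (Fin.castSuccEmb.prodMap Fin.castSuccEmb) := fun p hp => by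
    obtain ⟨a, ha⟩ := Fin.exists_castSucc_eq.2 (h p hp).1
    obtain ⟨b, hb⟩ := Fin.exists_castSucc_eq.2 (h p hp).2
    exact mem_map.2 ⟨(a, b), mem_univ _, Prod.ext ha hb⟩
  obtain ⟨β, -, hβ⟩ := subset_map_iff.1 hsub
  exact ⟨β, hβ.symm⟩

/-- `castSucc` of the largest unpaired vertex of `α`, and `0` if every vertex is paired. -/
noncomputable def lastUnpaired (α : Finset (Fin k × Fin k)) : Fin (k + 1) :=
  (univ \ endpoints α).sup Fin.castSucc

theorem lastUnpaired_eq {α : Finset (Fin k × Fin k)} {x : Fin k} (hx : x ∉ endpoints α)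
    (hmax : ∀ w ∉ endpoints α, w ≤ x) : lastUnpaired α = x.castSucc :=
  le_antisymm
    (Finset.sup_le fun w hw => Fin.castSucc_le_castSucc_iff.2 (hmax w (mem_sdiff.1 hw).2))
    (le_sup (mem_sdiff.2 ⟨mem_univ x, hx⟩))

noncomputable def closeLast (α : Finset (Fin k × Fin k)) : Finset (Fin (k + 1) × Fin (k + 1)) :=
  insert (lastUnpaired α, Fin.last k) (liftArcs α)

theorem arc_notMem_liftArcs (α : Finset (Fin k × Fin k)) (x : Fin (k + 1)) :
    (x, Fin.last k) ∉ liftArcs α := fun h =>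
  last_notMem_endpoints_liftArcs α (mem_endpoints.2 ⟨_, h, Or.inr rfl⟩)

theorem card_closeLast (α : Finset (Fin k × Fin k)) : (closeLast α).card = α.card + 1 := by
  rw [closeLast, card_insert_of_notMem (arc_notMem_liftArcs α _), card_liftArcs]

theorem liftArcs_ne_closeLast (α β : Finset (Fin k × Fin k)) : liftArcs α ≠ closeLast β :=
  fun h => arc_notMem_liftArcs α _ (by rw [h]; exact mem_insert_self _ _)

theorem filter_closeLast (α : Finset (Fin k × Fin k)) :
    (closeLast α).filter (·.2 ≠ Fin.last k) = liftArcs α := by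
  rw [closeLast, filter_insert, if_neg (not_not.2 rfl), filter_true_of_mem]
  intro p hp
  obtain ⟨q, -, rfl⟩ := mem_map.1 hp
  exact Fin.castSucc_ne_last q.2

theorem closeLast_injective : Function.Injective (closeLast (k := k)) := fun α β h =>
  liftArcs_injective (by rw [← filter_closeLast, h, filter_closeLast])

theorem _root_.IsTLConfig.closeLast {α : Finset (Fin k × Fin k)} (h : IsTLConfig α)
    (hk : 2 * α.card < k) : IsTLConfig (closeLast α) := by
  obtain ⟨m, hm, hsup⟩ := exists_mem_eq_sup _ (h.exists_unpaired hk) Fin.castSucc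
  have hmax : ∀ w ∉ endpoints α, w ≤ m := fun w hw =>
    Fin.castSucc_le_castSucc_iff.1 (hsup ▸ le_sup (mem_sdiff.2 ⟨mem_univ w, hw⟩))
  rw [TLConfig.closeLast, lastUnpaired, hsup]
  refine (isTLConfig_liftArcs_iff.2 h).insert (Fin.castSucc_lt_last m)
    (castSucc_mem_endpoints_liftArcs.not.2 (mem_sdiff.1 hm).2)
    (last_notMem_endpoints_liftArcs α) fun z hmz hzl => ?_
  obtain ⟨w, rfl⟩ := Fin.exists_castSucc_eq.2 hzl.ne
  rw [castSucc_mem_endpoints_liftArcs]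
  by_contra hw
  exact (hmax w hw).not_gt (Fin.castSucc_lt_castSucc_iff.1 hmz)

theorem _root_.IsTLConfig.exists_closeLast_eq {α : Finset (Fin (k + 1) × Fin (k + 1))}
    (h : IsTLConfig α) {x : Fin (k + 1)} (hx : (x, Fin.last k) ∈ α) :
    ∃ β, IsTLConfig β ∧ β.card + 1 = α.card ∧ closeLast β = α := by
  have hrest : ∀ p ∈ α.erase (x, Fin.last k), p.1 ≠ Fin.last k ∧ p.2 ≠ Fin.last k := by
    intro p hp
    have hp' := mem_of_mem_erase hp
    exact ⟨((h.1 p hp').trans_le (Fin.le_last _)).ne,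
      (h.2.1 p hp' _ hx (ne_of_mem_erase hp)).2.2.2⟩
  obtain ⟨β, hβ⟩ := exists_liftArcs_eq hrest
  have hβTL : IsTLConfig β := by
    rw [← isTLConfig_liftArcs_iff, hβ]
    exact h.erase hx fun p _ hp => (Fin.le_last p.2).not_gt hp.2
  obtain ⟨m, rfl⟩ := Fin.exists_castSucc_eq.2 (h.1 _ hx).ne
  have hpaired : ∀ w, w ∈ endpoints β ↔ ∃ q ∈ α, q ≠ (m.castSucc, Fin.last k) ∧
      (w.castSucc = q.1 ∨ w.castSucc = q.2) := by
    intro w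
    rw [← castSucc_mem_endpoints_liftArcs, hβ, mem_endpoints]
    simp only [mem_erase]
    grind
  have hm : m ∉ endpoints β := by
    rw [hpaired]
    rintro ⟨q, hq, hqx, hmq⟩
    have := h.2.1 q hq _ hx hqx
    grind
  have hmax : ∀ w ∉ endpoints β, w ≤ m := by
    intro w hw
    by_contra! hmw
    obtain ⟨q, hq, hwq⟩ := h.2.2.2 _ hx w.castSucc (Fin.castSucc_lt_castSucc_iff.2 hmw)
      (Fin.castSucc_lt_last w)
    refine hw ((hpaired w).2 ⟨q, hq, ?_, hwq⟩)
    rintro rfl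
    exact hwq.elim (fun e => hmw.ne' (Fin.castSucc_injective _ e))
      (fun e => Fin.castSucc_ne_last w e)
  refine ⟨β, hβTL, ?_, ?_⟩
  · rw [← card_liftArcs, hβ, card_erase_add_one hx]
  · rw [closeLast, lastUnpaired_eq hm hmax, hβ, insert_erase hx]

def configs (k n : ℕ) : Set (Finset (Fin k × Fin k)) :=
  {α | IsTLConfig α ∧ α.card = n}

theorem configs_zero (k : ℕ) : configs k 0 = {∅} := by
  ext α
  simp only [configs, Set.mem_ofPred_eq, card_eq_zero, Set.mem_singleton_iff]
  exact ⟨And.right, fun h => ⟨h ▸ isTLConfig_empty, h⟩⟩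

theorem configs_eq_empty {k n : ℕ} (h : k < 2 * n) : configs k n = ∅ :=
  Set.eq_empty_of_forall_notMem fun _ ⟨hα, hcard⟩ => by
    have := hα.two_mul_card_le
    omega

theorem configs_succ_succ {k n : ℕ} (h : 2 * n < k) :
    configs (k + 1) (n + 1) = liftArcs '' configs k (n + 1) ∪ closeLast '' configs k n := by
  ext α
  simp only [configs, Set.mem_union, Set.mem_image, Set.mem_ofPred_eq]
  constructor
  · rintro ⟨hα, hcard⟩
    by_cases hlast : ∃ x, (x, Fin.last k) ∈ α
    · obtain ⟨x, hx⟩ := hlast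
      obtain ⟨β, hβ, hβcard, rfl⟩ := hα.exists_closeLast_eq hx
      exact Or.inr ⟨β, ⟨hβ, by omega⟩, rfl⟩
    · push Not at hlast
      obtain ⟨β, rfl⟩ := exists_liftArcs_eq fun p hp =>
        ⟨((hα.1 p hp).trans_le (Fin.le_last _)).ne, fun e => hlast p.1 (by rwa [← e])⟩
      exact Or.inl ⟨β, ⟨isTLConfig_liftArcs_iff.1 hα, card_liftArcs β ▸ hcard⟩, rfl⟩
  · rintro (⟨β, ⟨hβ, hcard⟩, rfl⟩ | ⟨β, ⟨hβ, hcard⟩, rfl⟩)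
    · exact ⟨isTLConfig_liftArcs_iff.2 hβ, by rw [card_liftArcs, hcard]⟩
    · exact ⟨hβ.closeLast (by omega), by rw [card_closeLast, hcard]⟩

theorem ncard_configs_succ_succ {k n : ℕ} (h : 2 * n < k) :
    (configs (k + 1) (n + 1)).ncard = (configs k (n + 1)).ncard + (configs k n).ncard := by
  have hdisj : Disjoint (liftArcs '' configs k (n + 1)) (closeLast '' configs k n) :=
    Set.disjoint_left.2 fun _ ⟨β, _, hβ⟩ ⟨γ, _, hγ⟩ => liftArcs_ne_closeLast β γ (hβ.trans hγ.symm)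
  rw [configs_succ_succ h, Set.ncard_union_eq hdisj,
    Set.ncard_image_of_injective _ liftArcs_injective,
    Set.ncard_image_of_injective _ closeLast_injective]

def ballot (k n : ℕ) : ℤ :=
  (k.choose n : ℤ) - (if n = 0 then 0 else (k.choose (n - 1) : ℤ))

theorem ballot_zero_right (k : ℕ) : ballot k 0 = 1 := by
  simp [ballot]

theorem ballot_succ_succ (k n : ℕ) : ballot (k + 1) (n + 1) = ballot k (n + 1) + ballot k n := by
  rcases n with _ | n
  · simp [ballot]
  · simp only [ballot, Nat.choose_succ_succ', Nat.add_sub_cancel, Nat.add_eq_zero_iff,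
      one_ne_zero, and_false, if_false]
    push_cast
    ring

theorem ballot_two_mul_add_one (n : ℕ) : ballot (2 * n + 1) (n + 1) = 0 := by
  simp [ballot, Nat.choose_symm_half]

theorem ncard_configs : ∀ {k n : ℕ}, 2 * n ≤ k + 1 → (configs k n).ncard = ballot k n
  | k, 0, _ => by simp [configs_zero, ballot_zero_right]
  | 0, n + 1, h => by omega
  | k + 1, n + 1, h => by
    obtain rfl | hk := (show 2 * n ≤ k by omega).eq_or_lt
    · simp [configs_eq_empty (show 2 * n + 1 < 2 * (n + 1) by omega), ballot_two_mul_add_one]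
    · rw [ncard_configs_succ_succ hk, Nat.cast_add, ncard_configs (by omega),
        ncard_configs (by omega), ballot_succ_succ]

end TLConfig

/-- The number of configurations of `n` non-crossing arcs on `k` vertices with no arc
spanning an unpaired vertex equals the ballot number `C(k, n) - C(k, n-1)`
(with `C(k, -1) = 0`), for `0 ≤ 2n ≤ k`. -/
theorem card_TLConfig {k n : ℕ} (h : 2 * n ≤ k) :
    (Nat.card {α : Finset (Fin k × Fin k) // IsTLConfig α ∧ α.card = n} : ℤ) =
      (k.choose n : ℤ) - (if n = 0 then 0 else (k.choose (n - 1) : ℤ)) :=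
  TLConfig.ncard_configs (by omega)
end
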